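/- For the exponential time decay attribution rule (with any half-life parameter), the impression adjacency relation with post-attribution contribution bound enforcement is invalid: the ℓ1-distance between attributed datasets of adjacent datasets (differing by one impression) is not bounded by C₀·r for any absolute constant C₀. -/

import Mathlib

/-! Framework for differentially private ad conversion measurement
(Delaney et al., "Differentially Private Ad Conversion Measurement"). -/

structure Impression where
  time : ℕ
  user : ℕ
  pub : ℕ
  adv : ℕ
  id : ℕ
deriving DecidableEq

structure Conversion where
  time : ℕ
  user : ℕ
  adv : ℕ
  id : ℕ
deriving DecidableEq

structure Dataset where
  imps : List Impression
  convs : List Conversion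

/-- An attribution rule maps a time-ordered list of impressions and a conversion
to a list of credits (one per impression). -/
abbrev AttrRule := List Impression → Conversion → List ℝ

/-- A valid attribution rule outputs one nonnegative weight per impression, summing to 1. -/
def ValidRule (a : AttrRule) : Prop :=
  ∀ is c, is ≠ [] →
    (a is c).length = is.length ∧ (a is c).sum = 1 ∧ ∀ w ∈ a is c, (0 : ℝ) ≤ w

/-- Impressions eligible for attribution of conversion `c`: those occurring earlier
with the same user and advertiser. -/
def eligible (D : Dataset) (c : Conversion) : List Impression :=
  D.imps.filter fun i => decide (i.time < c.time ∧ i.user = c.user ∧ i.adv = c.adv)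

/-- ℓ₁ distance between attributed datasets. -/
noncomputable def l1dist (w w' : (Impression × Conversion) →₀ ℝ) : ℝ :=
  (w - w').sum fun _ v => |v|

/-- Impressions and conversions are listed in time order. -/
def SortedDS (D : Dataset) : Prop :=
  D.imps.Pairwise (fun i j => i.time ≤ j.time) ∧
  D.convs.Pairwise (fun c c' => c.time ≤ c'.time)

/-- Inner loop of post-attribution contribution-bound enforcement: each weighted
(impression, conversion) pair is kept only if the remaining bound of its scope covers
the weight, in which case the weight is deducted. -/
noncomputable def applyPairs {σ : Type} [DecidableEq σ] (s : Impression → σ) (c : Conversion) :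
    List (Impression × ℝ) → (σ → ℝ) × ((Impression × Conversion) →₀ ℝ) →
      (σ → ℝ) × ((Impression × Conversion) →₀ ℝ)
  | [], st => st
  | (i, w) :: rest, st =>
      if w ≤ st.1 (s i) then
        applyPairs s c rest
          (Function.update st.1 (s i) (st.1 (s i) - w), st.2 + Finsupp.single (i, c) w)
      else
        applyPairs s c rest st

/-- Attribution with post-attribution contribution bound enforcement (Algorithm 1),
with contribution bounding scope map `s` and contribution bound `r`. -/
noncomputable def postAttr {σ : Type} [DecidableEq σ] (a : AttrRule) (s : Impression → σ)
    (r : ℝ) (D : Dataset) : (Impression × Conversion) →₀ ℝ :=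
  (D.convs.foldl
    (fun st c => applyPairs s c ((eligible D c).zip (a (eligible D c) c)) st)
    ((fun _ => r : σ → ℝ), (0 : (Impression × Conversion) →₀ ℝ))).2

/-- Attribution with pre-attribution contribution bound enforcement (Algorithm 2):
for each conversion, every scope with an eligible impression pays one unit of its bound
if available, otherwise its impressions are excluded from attribution. -/
noncomputable def preAttr {σ : Type} [DecidableEq σ] (a : AttrRule) (s : Impression → σ)
    (r : ℝ) (D : Dataset) : (Impression × Conversion) →₀ ℝ :=
  (D.convs.foldl
    (fun (st : (σ → ℝ) × ((Impression × Conversion) →₀ ℝ)) c =>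
      let el := eligible D c
      let surv := el.filter fun i => decide ((1 : ℝ) ≤ st.1 (s i))
      let scopes := (el.map s).dedup
      ((fun x => if x ∈ scopes ∧ (1 : ℝ) ≤ st.1 x then st.1 x - 1 else st.1 x : σ → ℝ),
        st.2 + ((surv.zip (a surv c)).map fun p => Finsupp.single (p.1, c) p.2).sum))
    ((fun _ => r : σ → ℝ), (0 : (Impression × Conversion) →₀ ℝ))).2

/-- Attribution without any contribution bound enforcement. -/
noncomputable def attrNoCap (a : AttrRule) (D : Dataset) :
    (Impression × Conversion) →₀ ℝ :=
  (D.convs.map fun c =>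
    (((eligible D c).zip (a (eligible D c) c)).map fun p => Finsupp.single (p.1, c) p.2).sum).sum

/-- Adjacency: `D'` results from `D` by adding a single impression (in time order). -/
def AddOneImpression (D D' : Dataset) : Prop :=
  ∃ (i0 : Impression) (l₁ l₂ : List Impression),
    D.imps = l₁ ++ l₂ ∧ D'.imps = l₁ ++ i0 :: l₂ ∧ D.convs = D'.convs

/-- Adjacency: `D` results from `D'` by removing all impressions whose scope (under `si`)
is `v` and all conversions whose scope (under `sc`) is `v`. -/
def RemovesScope {σ : Type} [DecidableEq σ] (si : Impression → σ)
    (sc : Conversion → Option σ) (v : σ) (D D' : Dataset) : Prop :=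
  D.imps = D'.imps.filter (fun i => decide (si i ≠ v)) ∧
  D.convs = D'.convs.filter (fun c => decide (sc c ≠ some v))

/-- First-touch attribution. -/
noncomputable def FTA : AttrRule := fun is _ =>
  match is with
  | [] => []
  | _ :: t => 1 :: t.map fun _ => 0

/-- Last-touch attribution. -/
noncomputable def LTA : AttrRule := fun is _ =>
  match is with
  | [] => []
  | _ :: _ => List.replicate (is.length - 1) 0 ++ [1]

/-- Uniform multi-touch attribution. -/
noncomputable def UNI : AttrRule := fun is _ => is.map fun _ => ((is.length : ℝ))⁻¹

/-- U-shaped attribution. -/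
noncomputable def USH : AttrRule := fun is _ =>
  match is with
  | [] => []
  | [_] => [1]
  | [_, _] => [0.5, 0.5]
  | _ :: _ :: _ :: _ =>
      (0.4 : ℝ) :: (List.replicate (is.length - 2) ((0.2 : ℝ) / ((is.length : ℝ) - 2)) ++ [0.4])

/-- Exponential time decay attribution with half-life `th`. -/
noncomputable def EXPR (th : ℝ) : AttrRule := fun is c =>
  let wt : Impression → ℝ := fun i => (2 : ℝ) ^ (-(((c.time : ℝ) - (i.time : ℝ)) / th))
  is.map fun i => wt i / (is.map wt).sum

/-! In `before t n`, `n` impressions at time `0` face `n` conversions at time `t + 1`. Exponential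
decay weighs them equally, so every conversion credits `1 / n` to each of them, all credits fit
the budget `1`, and the attributed mass is `n`. Adding one impression at time `t`, with `t` so
large that its decay weight exceeds `n²` times that of the early ones, gives it more than half of
the first conversion's credit; from then on its remaining budget is below its share, so its
credit is dropped at every later conversion, while the early impressions only collect `n²` tiny
shares. The attributed mass drops below `2`, and the ℓ₁ distance is at least the difference of
the masses. -/

open Finsupp

section applyPairs

variable {σ : Type} [DecidableEq σ] (s : Impression → σ) (c : Conversion)

theorem applyPairs_append (l₁ l₂ : List (Impression × ℝ))
    (st : (σ → ℝ) × ((Impression × Conversion) →₀ ℝ)) :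
    applyPairs s c (l₁ ++ l₂) st = applyPairs s c l₂ (applyPairs s c l₁ st) := by
  induction l₁ generalizing st with
  | nil => rfl
  | cons p l ih =>
    obtain ⟨i, w⟩ := p
    by_cases h : w ≤ st.1 (s i) <;> simp [applyPairs, h, ih]

theorem applyPairs_singleton_of_le {i : Impression} {w : ℝ}
    {st : (σ → ℝ) × ((Impression × Conversion) →₀ ℝ)} (h : w ≤ st.1 (s i)) :
    applyPairs s c [(i, w)] st =
      (Function.update st.1 (s i) (st.1 (s i) - w), st.2 + single (i, c) w) := by
  simp [applyPairs, h]

theorem applyPairs_singleton_of_lt {i : Impression} {w : ℝ}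
    {st : (σ → ℝ) × ((Impression × Conversion) →₀ ℝ)} (h : st.1 (s i) < w) :
    applyPairs s c [(i, w)] st = st := by
  simp [applyPairs, not_le.2 h]

theorem applyPairs_map_const {l : List Impression} (hl : (l.map s).Nodup) (w : ℝ)
    {st : (σ → ℝ) × ((Impression × Conversion) →₀ ℝ)} (hw : ∀ i ∈ l, w ≤ st.1 (s i)) :
    applyPairs s c (l.map fun i => (i, w)) st =
      (fun y => if y ∈ l.map s then st.1 y - w else st.1 y,
        st.2 + (l.map fun i => single (i, c) w).sum) := by
  induction l generalizing st with
  | nil => simp [applyPairs]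
  | cons i l ih =>
    rw [List.map_cons, List.nodup_cons] at hl
    have hfresh : ∀ j ∈ l, Function.update st.1 (s i) (st.1 (s i) - w) (s j) = st.1 (s j) :=
      fun j hj => Function.update_of_ne
        (fun h => hl.1 (by rw [← h]; exact List.mem_map_of_mem hj)) _ _
    rw [List.map_cons, applyPairs, if_pos (hw i List.mem_cons_self),
      ih hl.2 fun j hj => by simpa [hfresh j hj] using hw j (List.mem_cons_of_mem _ hj)]
    refine Prod.ext (funext fun y => ?_) (by simp [add_assoc])
    by_cases hy : y = s i
    · subst hy
      simp [hl.1]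
    · simp [hy]

end applyPairs

theorem List.foldl_replicate_eq_of_step {α β : Type*} (f : β → α → β) (a : α) (g : ℕ → β)
    {n : ℕ} (h : ∀ j < n, f (g j) a = g (j + 1)) :
    (List.replicate n a).foldl f (g 0) = g n := by
  induction n with
  | zero => rfl
  | succ n ih =>
    rw [List.replicate_succ', List.foldl_append, ih fun j hj => h j (by omega)]
    exact h n n.lt_succ_self

theorem postAttr_replicate_eq_of_step {σ : Type} [DecidableEq σ] (a : AttrRule) (s : Impression → σ)
    (r : ℝ) (imps : List Impression) (c : Conversion) {n : ℕ}
    (g : ℕ → (σ → ℝ) × ((Impression × Conversion) →₀ ℝ)) (h₀ : g 0 = (fun _ => r, 0))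
    (hstep : ∀ j < n, applyPairs s c
      ((eligible ⟨imps, List.replicate n c⟩ c).zip (a (eligible ⟨imps, List.replicate n c⟩ c) c))
        (g j) = g (j + 1)) :
    postAttr a s r ⟨imps, List.replicate n c⟩ = (g n).2 := by
  rw [postAttr, ← h₀]
  exact congrArg Prod.snd (List.foldl_replicate_eq_of_step _ c g hstep)

-- `Finsupp.degree f` is the total mass `∑ x, f x`.
theorem degree_sub_le_l1dist (f g : (Impression × Conversion) →₀ ℝ) :
    degree f - degree g ≤ l1dist f g := by
  rw [← map_sub, degree_apply, l1dist, Finsupp.sum]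
  exact Finset.sum_le_sum fun _ _ => le_abs_self _

theorem eligible_eq_imps {D : Dataset} {c : Conversion}
    (h : ∀ i ∈ D.imps, i.time < c.time ∧ i.user = c.user ∧ i.adv = c.adv) :
    eligible D c = D.imps :=
  List.filter_eq_self.2 fun i hi => by simpa using h i hi

noncomputable def decay (th d : ℝ) : ℝ := (2 : ℝ) ^ (-(d / th))

theorem decay_pos (th d : ℝ) : 0 < decay th d := Real.rpow_pos_of_pos two_pos _

theorem EXPR_eq (th : ℝ) (l : List Impression) (c : Conversion) :
    EXPR th l c = l.map fun i => decay th (c.time - i.time) /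
      (l.map fun j => decay th (c.time - j.time)).sum := rfl

theorem EXPR_eq_UNI_of_time_eq (th : ℝ) {l : List Impression} (c : Conversion) {t : ℕ}
    (h : ∀ i ∈ l, i.time = t) : EXPR th l c = UNI l c := by
  have hw : ∀ i ∈ l, decay th (c.time - i.time) = decay th (c.time - t) := by
    intro i hi
    rw [h i hi]
  rw [EXPR_eq, UNI, List.map_congr_left hw, List.map_const', List.sum_replicate, nsmul_eq_mul]
  exact List.map_congr_left fun i hi => by
    rw [hw i hi, div_mul_cancel_right₀ (decay_pos _ _).ne']

theorem decay_one_eq_mul_rpow (th : ℝ) (t : ℕ) :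
    decay th 1 = decay th (t + 1) * (2 : ℝ) ^ ((t : ℝ) / th) := by
  rw [decay, decay, ← Real.rpow_add two_pos]
  ring_nf

theorem exists_mul_decay_lt {th : ℝ} (hth : 0 < th) (x : ℝ) :
    ∃ t : ℕ, x * decay th (t + 1) < decay th 1 := by
  obtain ⟨k, hk⟩ := pow_unbounded_of_one_lt x one_lt_two
  obtain ⟨t, ht⟩ := exists_nat_ge (th * k)
  refine ⟨t, ?_⟩
  have hkt : (2 : ℝ) ^ k ≤ (2 : ℝ) ^ ((t : ℝ) / th) := by
    rw [← Real.rpow_natCast]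
    exact Real.rpow_le_rpow_of_exponent_le one_le_two ((le_div_iff₀' hth).2 ht)
  rw [decay_one_eq_mul_rpow th t, mul_comm]
  exact mul_lt_mul_of_pos_left (hk.trans_le hkt) (decay_pos _ _)

namespace ExpCounterexample

def early (n : ℕ) : List Impression := (List.range n).map fun k => ⟨0, 0, 0, 0, k⟩

def late (t n : ℕ) : Impression := ⟨t, 0, 0, 0, n⟩

def conv (t : ℕ) : Conversion := ⟨t + 1, 0, 0, 0⟩

def before (t n : ℕ) : Dataset := ⟨early n, List.replicate n (conv t)⟩

def after (t n : ℕ) : Dataset := ⟨early n ++ [late t n], List.replicate n (conv t)⟩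

theorem early_nodup (n : ℕ) : (early n).Nodup :=
  List.nodup_range.map fun a b h => by simpa using congrArg Impression.id h

theorem time_user_adv_of_mem_early {n : ℕ} {i : Impression} (h : i ∈ early n) :
    i.time = 0 ∧ i.user = 0 ∧ i.adv = 0 := by
  obtain ⟨k, -, rfl⟩ := List.mem_map.1 h
  exact ⟨rfl, rfl, rfl⟩

theorem late_not_mem_early (t n : ℕ) : late t n ∉ early n := by
  simp [early, late]

theorem addOneImpression_before_after (t n : ℕ) : AddOneImpression (before t n) (after t n) :=
  ⟨late t n, early n, [], (List.append_nil _).symm, rfl, rfl⟩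

theorem sortedDS_after (t n : ℕ) : SortedDS (after t n) := by
  refine ⟨List.pairwise_append.2 ⟨?_, List.pairwise_singleton _ _, ?_⟩,
    List.pairwise_replicate.2 (Or.inr le_rfl)⟩
  · refine List.Pairwise.imp_of_mem (fun ha hb _ => ?_) (List.pairwise_of_forall fun _ _ => trivial)
    rw [(time_user_adv_of_mem_early ha).1, (time_user_adv_of_mem_early hb).1]
  · intro i hi j hj
    rw [(time_user_adv_of_mem_early hi).1]
    exact Nat.zero_le _

theorem eligible_conv {D : Dataset} {t : ℕ}
    (h : ∀ i ∈ D.imps, i.time ≤ t ∧ i.user = 0 ∧ i.adv = 0) : eligible D (conv t) = D.imps :=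
  eligible_eq_imps fun i hi => by
    obtain ⟨ht, hu, ha⟩ := h i hi
    exact ⟨Nat.lt_succ_of_le ht, hu, ha⟩

theorem zip_EXPR_early (th : ℝ) (t n : ℕ) :
    (early n).zip (EXPR th (early n) (conv t)) = (early n).map fun i => (i, (n : ℝ)⁻¹) := by
  rw [EXPR_eq_UNI_of_time_eq th _ fun i hi => by rw [(time_user_adv_of_mem_early hi).1], UNI,
    ← List.map_prod_left_eq_zip]
  simp [early]

theorem zip_EXPR_early_late (th : ℝ) (t n : ℕ) :
    (early n ++ [late t n]).zip (EXPR th (early n ++ [late t n]) (conv t)) =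
      (early n).map (fun i => (i, decay th (t + 1) / (n * decay th (t + 1) + decay th 1))) ++
        [(late t n, decay th 1 / (n * decay th (t + 1) + decay th 1))] := by
  have hearly : ∀ i ∈ early n, decay th ((conv t).time - i.time) = decay th (t + 1) := by
    intro i hi
    rw [(time_user_adv_of_mem_early hi).1]
    simp [conv]
  rw [EXPR_eq, ← List.map_prod_left_eq_zip, List.map_append, List.map_append, List.sum_append,
    List.map_congr_left hearly, List.map_const']
  simp [early, conv, late]

-- Budgets and credits of post-attribution on `before t n` after its first `j` conversions.
noncomputable def stateBefore (t n j : ℕ) : (Impression → ℝ) × ((Impression × Conversion) →₀ ℝ) :=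
  (fun x => if x ∈ early n then 1 - j * (n : ℝ)⁻¹ else 1,
    j • ((early n).map fun i => single (i, conv t) (n : ℝ)⁻¹).sum)

theorem stateBefore_succ {t n j : ℕ} (hj : j < n) :
    applyPairs (fun i => i) (conv t) ((early n).map fun i => (i, (n : ℝ)⁻¹)) (stateBefore t n j) =
      stateBefore t n (j + 1) := by
  have hn : (0 : ℝ) < n := by exact_mod_cast (Nat.zero_le j).trans_lt hj
  have hjn : ((j : ℝ) + 1) * (n : ℝ)⁻¹ ≤ 1 := by
    rw [← div_eq_mul_inv, div_le_one hn]
    exact_mod_cast hj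
  rw [applyPairs_map_const _ _ (by simpa using early_nodup n) _ fun i hi => by
    simp only [stateBefore, if_pos hi]
    linarith]
  refine Prod.ext (funext fun x => ?_) ?_
  · by_cases hx : x ∈ early n <;> simp [stateBefore, hx]
    ring
  · simp [stateBefore, succ_nsmul]

theorem postAttr_before (th : ℝ) (t n : ℕ) :
    postAttr (EXPR th) (fun i => i) 1 (before t n) = (stateBefore t n n).2 := by
  refine postAttr_replicate_eq_of_step _ _ _ _ _ _
    (Prod.ext (funext fun x => by simp [stateBefore]) (by simp [stateBefore])) fun j hj => ?_
  rw [eligible_conv fun i hi => by simp [time_user_adv_of_mem_early hi], zip_EXPR_early]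
  exact stateBefore_succ hj

theorem degree_postAttr_before (th : ℝ) (t : ℕ) {n : ℕ} (hn : n ≠ 0) :
    degree (postAttr (EXPR th) (fun i => i) 1 (before t n)) = n := by
  simp [postAttr_before, stateBefore, map_list_sum, Function.comp_def, early, hn]

-- The same for `after t n`, where `α` and `β` are the shares of the late and the early impressions.
noncomputable def stateAfter (t n j : ℕ) (α β : ℝ) :
    (Impression → ℝ) × ((Impression × Conversion) →₀ ℝ) :=
  (fun x => if x ∈ early n then 1 - j * β else if x = late t n ∧ j ≠ 0 then 1 - α else 1,
    (if j = 0 then 0 else single (late t n, conv t) α) +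
      j • ((early n).map fun i => single (i, conv t) β).sum)

theorem stateAfter_succ {t n j : ℕ} {α β : ℝ} (hβ : 0 ≤ β) (hnβ : n * β ≤ 1) (hα : α ≤ 1)
    (hα' : 1 - α < α) (hj : j < n) :
    applyPairs (fun i => i) (conv t) ((early n).map (fun i => (i, β)) ++ [(late t n, α)])
      (stateAfter t n j α β) = stateAfter t n (j + 1) α β := by
  have hjβ : ((j : ℝ) + 1) * β ≤ 1 :=
    le_trans (mul_le_mul_of_nonneg_right (by exact_mod_cast hj) hβ) hnβ
  rw [applyPairs_append, applyPairs_map_const _ _ (by simpa using early_nodup n) _ fun i hi => by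
    simp only [stateAfter, if_pos hi]
    linarith]
  have hlate := late_not_mem_early t n
  rcases Nat.eq_zero_or_pos j with rfl | hj0
  · rw [applyPairs_singleton_of_le _ _ (by simpa [stateAfter, hlate] using hα)]
    refine Prod.ext (funext fun x => ?_) ?_
    · by_cases hx : x = late t n
      · simp [stateAfter, hx, hlate]
      · by_cases hx' : x ∈ early n <;> simp [stateAfter, hx, hx']
    · simp [stateAfter, add_comm]
  · rw [applyPairs_singleton_of_lt _ _ (by simpa [stateAfter, hlate, hj0.ne'] using hα')]
    refine Prod.ext (funext fun x => ?_) ?_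
    · by_cases hx : x ∈ early n
      · simp [stateAfter, hx]
        ring
      · simp [stateAfter, hx, hj0.ne']
    · simp [stateAfter, hj0.ne', succ_nsmul, add_assoc]

theorem degree_postAttr_after_lt (th : ℝ) (t : ℕ) {n : ℕ}
    (h : (n : ℝ) ^ 2 * decay th (t + 1) < decay th 1) :
    degree (postAttr (EXPR th) (fun i => i) 1 (after t n)) < 2 := by
  set wₑ := decay th (t + 1) with hwₑ
  set wₗ := decay th 1 with hwₗ
  have hₑ : 0 < wₑ := decay_pos _ _
  have hₗ : 0 < wₗ := decay_pos _ _
  have hnₑ₀ : 0 ≤ n * wₑ := by positivity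
  have hS : 0 < n * wₑ + wₗ := by positivity
  have hnₑ : n * wₑ < wₗ := by
    refine lt_of_le_of_lt (mul_le_mul_of_nonneg_right ?_ hₑ.le) h
    exact_mod_cast Nat.le_self_pow two_ne_zero n
  have hpost : postAttr (EXPR th) (fun i => i) 1 (after t n) =
      (stateAfter t n n (wₗ / (n * wₑ + wₗ)) (wₑ / (n * wₑ + wₗ))).2 := by
    refine postAttr_replicate_eq_of_step _ _ _ _ _ (fun j => stateAfter t n j _ _)
      (Prod.ext (funext fun x => by simp [stateAfter]) (by simp [stateAfter])) fun j hj => ?_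
    rw [eligible_conv fun i hi => ?_, zip_EXPR_early_late, ← hwₑ, ← hwₗ]
    · refine stateAfter_succ (by positivity) ?_ ?_ ?_ hj
      · rw [← mul_div_assoc, div_le_one hS]; linarith
      · rw [div_le_one hS]; linarith
      · rw [sub_lt_iff_lt_add, ← add_div, lt_div_iff₀ hS]; linarith
    · rcases List.mem_append.1 hi with hi | hi
      · simp [time_user_adv_of_mem_early hi]
      · simp [List.mem_singleton.1 hi, late]
  rcases Nat.eq_zero_or_pos n with rfl | hn
  · simp [hpost, stateAfter]
  have hmass : wₗ / (n * wₑ + wₗ) + n * (n * (wₑ / (n * wₑ + wₗ))) =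
      (wₗ + n ^ 2 * wₑ) / (n * wₑ + wₗ) := by
    field_simp
  simp only [hpost, stateAfter, hn.ne', if_false, map_add, map_nsmul, map_list_sum, List.map_map,
    Function.comp_def, degree_single, List.map_const', early, List.length_range,
    List.sum_replicate, nsmul_eq_mul, hmass]
  rw [div_lt_iff₀ hS]
  linarith

end ExpCounterexample

open ExpCounterexample

/-- Corollary A.8: for exponential time decay attribution (any half-life `th > 0`), the
impression adjacency relation with post-attribution enforcement is invalid: with bound
`r = 1`, the ℓ₁-distance between attributed datasets of adjacent datasets is not bounded
by any absolute constant `C₀` (hence not by `C₀ · r`). -/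
theorem post_attr_impression_exp_invalid (th : ℝ) (hth : 0 < th) :
    ∀ C₀ : ℝ, 0 < C₀ → ∃ D D' : Dataset, AddOneImpression D D' ∧ SortedDS D' ∧
      C₀ < l1dist (postAttr (EXPR th) (fun i => i) 1 D)
        (postAttr (EXPR th) (fun i => i) 1 D') := by
  intro C₀ hC₀
  obtain ⟨n, hn⟩ := exists_nat_gt (C₀ + 2)
  have hn₀ : n ≠ 0 := by
    rintro rfl
    linarith [Nat.cast_zero (R := ℝ)]
  obtain ⟨t, ht⟩ := exists_mul_decay_lt hth ((n : ℝ) ^ 2)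
  refine ⟨before t n, after t n, addOneImpression_before_after t n, sortedDS_after t n, ?_⟩
  calc C₀ < n - 2 := by linarith
    _ < degree (postAttr (EXPR th) (fun i => i) 1 (before t n)) -
        degree (postAttr (EXPR th) (fun i => i) 1 (after t n)) := by
      rw [degree_postAttr_before th t hn₀]
      linarith [degree_postAttr_after_lt th t ht]
    _ ≤ _ := degree_sub_le_l1dist _ _
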